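/- For every real r ≥ 0 and every n ∈ ℕ with n ≥ 1, the sequence (⌈n,k⌉_r)_{k=0}^n of r-Stirling numbers of the first kind is strictly log-concave: for every k ∈ {1,...,n-1} one has ⌈n,k⌉_r² > ⌈n,k+1⌉_r · ⌈n,k-1⌉_r. -/

import Mathlib

open Finset Filter MeasureTheory

/-- r-Stirling numbers of the first kind. -/
noncomputable def stirFir (r : ℝ) : ℕ → ℕ → ℝ
  | 0, 0 => 1
  | 0, _ + 1 => 0
  | n + 1, 0 => ((n : ℝ) + r) * stirFir r n 0
  | n + 1, k + 1 => ((n : ℝ) + r) * stirFir r n (k + 1) + stirFir r n k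

/-- r-Stirling numbers of the second kind. -/
noncomputable def stirSec (r : ℝ) : ℕ → ℕ → ℝ
  | 0, 0 => 1
  | 0, _ + 1 => 0
  | n + 1, 0 => r * stirSec r n 0
  | n + 1, k + 1 => ((k : ℝ) + 1 + r) * stirSec r n (k + 1) + stirSec r n k

/-- The r-Lah number L(n,k)_r. -/
noncomputable def lahNum (r : ℝ) (n k : ℕ) : ℝ :=
  ∑ j ∈ Finset.Icc k n, stirFir r n j * stirSec r j k

/-- The probability mass function of the r-Lah distribution. -/
noncomputable def lahPMF (r : ℝ) (n k j : ℕ) : ℝ :=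
  stirFir r n j * stirSec r j k / lahNum r n k

/-- The expectation of the r-Lah distribution. -/
noncomputable def lahExp (r : ℝ) (n k : ℕ) : ℝ :=
  (∑ j ∈ Finset.Icc k n, (j : ℝ) * stirFir r n j * stirSec r j k) / lahNum r n k

/-! Row `n + 1` is row `n` convolved with `(n + r, 1)`. With `a = n + r` and four consecutive
entries `A, B, C, D` of row `n`, the corresponding entries of row `n + 1` are `aA + B, aB + C,
aC + D`, and `(aB + C)² - (aA + B)(aC + D) = a² (B² - AC) + a (BC - AD) + (C² - BD)`.
By induction the first summand is positive and the last nonnegative, and the two log-concavity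
inequalities give `AD ≤ BC`. The induction runs up to the top index `k = n`, where the claim holds
because `s(n,n) = 1` and `s(n,n+1) = 0`. -/

lemma mul_le_mul_of_sq_bounds {A B C D : ℝ} (hA : 0 ≤ A) (hB : 0 < B) (hC : 0 ≤ C)
    (hABC : A * C ≤ B ^ 2) (hBCD : B * D ≤ C ^ 2) : A * D ≤ B * C := by
  refine le_of_mul_le_mul_left ?_ hB
  calc B * (A * D) = A * (B * D) := by ring
    _ ≤ A * C ^ 2 := mul_le_mul_of_nonneg_left hBCD hA
    _ = (A * C) * C := by ring
    _ ≤ B ^ 2 * C := mul_le_mul_of_nonneg_right hABC hC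
    _ = B * (B * C) := by ring

lemma mul_lt_sq_of_convolution_step {a A B C D : ℝ} (ha : 0 < a) (hA : 0 ≤ A) (hB : 0 < B)
    (hC : 0 ≤ C) (hABC : A * C < B ^ 2) (hBCD : B * D ≤ C ^ 2) :
    (a * A + B) * (a * C + D) < (a * B + C) ^ 2 := by
  have hAD := mul_le_mul_of_sq_bounds hA hB hC hABC.le hBCD
  have key : (a * B + C) ^ 2 - (a * A + B) * (a * C + D) =
      a ^ 2 * (B ^ 2 - A * C) + a * (B * C - A * D) + (C ^ 2 - B * D) := by ring
  have : 0 < a ^ 2 * (B ^ 2 - A * C) := mul_pos (pow_pos ha 2) (sub_pos.2 hABC)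
  have : 0 ≤ a * (B * C - A * D) := mul_nonneg ha.le (sub_nonneg.2 hAD)
  linarith [sub_nonneg.2 hBCD]

section StirFir

variable {r : ℝ}

lemma stirFir_succ_zero (n : ℕ) : stirFir r (n + 1) 0 = (n + r) * stirFir r n 0 := rfl

lemma stirFir_succ_succ (n k : ℕ) :
    stirFir r (n + 1) (k + 1) = (n + r) * stirFir r n (k + 1) + stirFir r n k := rfl

lemma stirFir_nonneg (hr : 0 ≤ r) (n k : ℕ) : 0 ≤ stirFir r n k := by
  induction n generalizing k with
  | zero => cases k <;> simp [stirFir]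
  | succ n ih =>
    have ha : 0 ≤ (n : ℝ) + r := by positivity
    cases k with
    | zero => rw [stirFir_succ_zero]; exact mul_nonneg ha (ih 0)
    | succ k => rw [stirFir_succ_succ]; exact add_nonneg (mul_nonneg ha (ih _)) (ih k)

lemma stirFir_eq_zero_of_lt {n k : ℕ} (h : n < k) : stirFir r n k = 0 := by
  induction n generalizing k with
  | zero => obtain ⟨k, rfl⟩ := Nat.exists_eq_add_one_of_ne_zero h.ne'; rfl
  | succ n ih =>
    obtain ⟨k, rfl⟩ := Nat.exists_eq_add_one_of_ne_zero (Nat.ne_zero_of_lt h)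
    rw [stirFir_succ_succ, ih (by omega), ih (by omega), mul_zero, zero_add]

@[simp]
lemma stirFir_self (n : ℕ) : stirFir r n n = 1 := by
  induction n with
  | zero => rfl
  | succ n ih =>
    rw [stirFir_succ_succ, stirFir_eq_zero_of_lt n.lt_succ_self, ih, mul_zero, zero_add]

lemma one_le_stirFir (hr : 0 ≤ r) {n k : ℕ} (hk : 1 ≤ k) (hkn : k ≤ n) :
    1 ≤ stirFir r n k := by
  obtain ⟨j, rfl⟩ := Nat.exists_eq_add_one_of_ne_zero (Nat.one_le_iff_ne_zero.1 hk)
  induction n, hkn using Nat.le_induction with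
  | base => simp
  | succ n hjn ih =>
    have ha : 1 ≤ (n : ℝ) + r := by
      have : (1 : ℝ) ≤ n := by exact_mod_cast hk.trans hjn
      linarith
    rw [stirFir_succ_succ]
    nlinarith [stirFir_nonneg hr n j]

lemma stirFir_mul_lt_sq (hr : 0 ≤ r) (n j : ℕ) (hjn : j + 1 ≤ n) :
    stirFir r n (j + 2) * stirFir r n j < stirFir r n (j + 1) ^ 2 := by
  induction n generalizing j with
  | zero => omega
  | succ n ih =>
    rcases Nat.lt_or_eq_of_le (Nat.le_of_succ_le_succ hjn) with hj | rfl
    · have ha : 0 < (n : ℝ) + r := by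
        have : (0 : ℝ) < n := by exact_mod_cast Nat.zero_lt_of_lt hj
        linarith
      obtain ⟨D, hC, hBD⟩ : ∃ D, stirFir r (n + 1) j = (n + r) * stirFir r n j + D ∧
          stirFir r n (j + 1) * D ≤ stirFir r n j ^ 2 := by
        cases j with
        | zero => exact ⟨0, by rw [stirFir_succ_zero, add_zero], by simpa using sq_nonneg _⟩
        | succ i => exact ⟨stirFir r n i, stirFir_succ_succ n i, (ih i (by omega)).le⟩
      rw [stirFir_succ_succ, stirFir_succ_succ, hC]
      exact mul_lt_sq_of_convolution_step ha (stirFir_nonneg hr _ _)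
        (one_pos.trans_le (one_le_stirFir hr (by omega) hj)) (stirFir_nonneg hr _ _) (ih j hj) hBD
    · rw [stirFir_eq_zero_of_lt (by omega), stirFir_self, zero_mul]
      norm_num

end StirFir

theorem stirFir_strict_log_concave_general (r : ℝ) (hr : 0 ≤ r) (n : ℕ)
    (k : ℕ) (hk1 : 1 ≤ k) (hk2 : k + 1 ≤ n) :
    stirFir r n (k + 1) * stirFir r n (k - 1) < (stirFir r n k) ^ 2 := by
  obtain ⟨j, rfl⟩ := Nat.exists_eq_add_one_of_ne_zero (Nat.one_le_iff_ne_zero.1 hk1)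
  exact stirFir_mul_lt_sq hr n j (by omega)

theorem stirFir_strict_log_concave (r : ℝ) (hr : 0 ≤ r) (n : ℕ) (hn : 1 ≤ n)
    (k : ℕ) (hk1 : 1 ≤ k) (hk2 : k + 1 ≤ n) :
    stirFir r n (k + 1) * stirFir r n (k - 1) < (stirFir r n k) ^ 2 :=
  stirFir_strict_log_concave_general r hr n k hk1 hk2
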